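/- arXiv:1604.07005 — 7 statements merged into one kernel-verified Lean document; each statement's English description precedes it below -/
import Mathlib

section
/- Let M be an m×n integer matrix. The linear map M : ℤⁿ → ℤᵐ strictly preserves the lexicographical order (i.e. l > 0 implies M·l > 0 in the lexicographic order) if and only if M is in column echelon form with positive leading entries, i.e. there exist indices 1 ≤ p₁ < p₂ < ... < pₙ ≤ m such that for each column i the entry M[pᵢ, i] > 0 and M[j, i] = 0 for all j > pᵢ. -/
/-- The lexicographic order on `ℤⁿ` with the *last* coordinate most significant:
`x < y` iff at the largest index where they differ, `x` is smaller. -/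
def lexLt {n : ℕ} (x y : Fin n → ℤ) : Prop :=
  ∃ i : Fin n, x i < y i ∧ ∀ j : Fin n, i < j → x j = y j

/-- `M` is in column echelon form with positive leading entries: there are row indices
`p 0 < p 1 < ... < p (n-1)` such that the leading entry `M (p i) i` of the `i`-th column
is positive and all entries of the `i`-th column below row `p i` vanish. -/
def IsColEchelonPos {m n : ℕ} (M : Matrix (Fin m) (Fin n) ℤ) : Prop :=
  ∃ p : Fin n → Fin m, StrictMono p ∧
    ∀ i : Fin n, 0 < M (p i) i ∧ ∀ j : Fin m, p i < j → M j i = 0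

/-- An `m × n` integer matrix strictly preserves the lexicographic order
(`l > 0` implies `M·l > 0`) iff it is in column echelon form with positive
leading entries. -/
theorem lex_preserving_iff_colEchelonPos {m n : ℕ} (M : Matrix (Fin m) (Fin n) ℤ) :
    (∀ l : Fin n → ℤ, lexLt 0 l → lexLt 0 (M.mulVec l)) ↔ IsColEchelonPos M := by
  constructor
  · intro h
    have hcol : ∀ i : Fin n, ∃ k : Fin m, 0 < M k i ∧ ∀ j : Fin m, k < j → M j i = 0 := by
      intro i
      have hl : lexLt 0 (M.mulVec (Pi.single i 1)) := by
        apply h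
        refine ⟨i, by simp, fun j hj => ?_⟩
        simp [Pi.single_eq_of_ne (Fin.ne_of_gt hj)]
      obtain ⟨k, hk1, hk2⟩ := hl
      have hmv : ∀ j : Fin m, M.mulVec (Pi.single i 1) j = M j i := by
        intro j
        simp [Matrix.mulVec, dotProduct, Pi.single_apply, mul_ite, Finset.sum_ite_eq']
      refine ⟨k, by rw [← hmv]; simpa using hk1, fun j hj => ?_⟩
      rw [← hmv]; exact (hk2 j hj).symm
    choose p hp1 hp2 using hcol
    refine ⟨p, ?_, fun i => ⟨hp1 i, hp2 i⟩⟩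
    intro i i' hii'
    by_contra hle
    push_neg at hle
    set t : ℤ := -(|M (p i) i'| + 1) with ht
    set l : Fin n → ℤ := Pi.single i t + Pi.single i' 1 with hldef
    have hlex : lexLt 0 l := by
      refine ⟨i', ?_, fun j hj => ?_⟩
      · simp [hldef, Pi.single_eq_of_ne (Fin.ne_of_lt hii').symm]
      · simp [hldef, Pi.single_eq_of_ne (Fin.ne_of_gt hj),
          Pi.single_eq_of_ne (Fin.ne_of_gt (hii'.trans hj))]
    have hmv : ∀ j : Fin m, M.mulVec l j = M j i * t + M j i' := by
      intro j
      simp [hldef, Matrix.mulVec, dotProduct, Pi.single_apply, mul_add, mul_ite,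
        Finset.sum_add_distrib, Finset.sum_ite_eq']
    obtain ⟨w, hw1, hw2⟩ := h l hlex
    have hneg : M.mulVec l (p i) < 0 := by
      rw [hmv]
      have h1 : 0 < M (p i) i := hp1 i
      nlinarith [le_abs_self (M (p i) i'), abs_nonneg (M (p i) i')]
    have hzero : ∀ j : Fin m, p i < j → M.mulVec l j = 0 := by
      intro j hj
      rw [hmv, hp2 i j hj, hp2 i' j (lt_of_le_of_lt hle hj)]
      ring
    rcases lt_trichotomy w (p i) with hlt | heq | hgt
    · have := hw2 (p i) hlt
      simp only [Pi.zero_apply] at this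
      omega
    · rw [heq] at hw1
      simp only [Pi.zero_apply] at hw1
      omega
    · have := hzero w hgt
      simp only [Pi.zero_apply] at hw1
      omega
  · rintro ⟨p, hmono, hp⟩ l ⟨i, hi, hz⟩
    simp only [Pi.zero_apply] at hi
    refine ⟨p i, ?_, fun j hj => ?_⟩
    · simp only [Pi.zero_apply]
      have : M.mulVec l (p i) = M (p i) i * l i := by
        rw [Matrix.mulVec, dotProduct]
        rw [Finset.sum_eq_single i]
        · intro k _ hk
          rcases lt_or_gt_of_ne hk with hk' | hk'
          · rw [(hp k).2 (p i) (hmono hk')]; ring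
          · rw [← hz k hk']; simp
        · intro hk; exact absurd (Finset.mem_univ i) hk
      rw [this]
      exact mul_pos ((hp i).1) hi
    · symm
      rw [Matrix.mulVec, dotProduct]
      apply Finset.sum_eq_zero
      intro k _
      rcases le_or_gt k i with hk | hk
      · rw [(hp k).2 j (lt_of_le_of_lt (hmono.monotone hk) hj)]; ring
      · rw [← hz k hk]; simp
end

section
/- An element l ∈ ℤⁿ satisfies l > 0 in the lexicographic order if and only if l ≠ 0 and there exists λ such that the set {k·l : k ∈ ℕ, k ≥ 1} is contained in the 'upper set' ℤⁿ_λ. -/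
/-! If the last coordinate `a` of `l` is positive, the multiples `k • l` have pairwise distinct
last coordinates `k * a`, so the fibre index `λ'(k * a)` can be chosen separately for each of
them; the only constraint left is `λₙ ≤ k * a`. If `a < 0` the last coordinates `k * a` are
unbounded below, so no `λₙ` works. If `a = 0`, all multiples lie in the single fibre over `0`,
and the problem drops one dimension. The lexicographic order obeys the same recursion. -/

/-- The index set `Λₙ` (here `Lambda n` corresponds to `Λ_{n+1}`):
`Λ₁ = ℤ` and `Λₙ = Map(ℤ, Λₙ₋₁) × ℤ`. -/
@[reducible] def Lambda : ℕ → Type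
  | 0 => ℤ
  | n + 1 => (ℤ → Lambda n) × ℤ

/-- The subset `ℤⁿ_λ ⊆ ℤⁿ` (in dimension `n+1`):
`ℤ_λ = {l ≥ λ}` and `ℤⁿ_{(λ',λₙ)} = ⋃_{lₙ ≥ λₙ} ℤⁿ⁻¹_{λ'(lₙ)} × {lₙ}`. -/
def Zset : (n : ℕ) → Lambda n → Set (Fin (n + 1) → ℤ)
  | 0, lam => {l | lam ≤ l 0}
  | n + 1, lam => {l | lam.2 ≤ l (Fin.last (n + 1)) ∧
      Fin.init l ∈ Zset n (lam.1 (l (Fin.last (n + 1))))}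

namespace Fin

variable {n : ℕ} {α : Type*}

theorem snoc_zero_zero [Zero α] : (snoc 0 0 : Fin (n + 1) → α) = 0 :=
  snoc_init_self 0

theorem snoc_eq_zero_iff [Zero α] (x : Fin n → α) (a : α) :
    (snoc x a : Fin (n + 1) → α) = 0 ↔ x = 0 ∧ a = 0 := by
  rw [← snoc_zero_zero, snoc_inj]

theorem smul_snoc {M : Type*} [SMul M α] (c : M) (x : Fin n → α) (a : α) :
    c • (snoc x a : Fin (n + 1) → α) = snoc (c • x) (c • a) := by
  ext i
  refine lastCases ?_ (fun j => ?_) i <;> simp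

end Fin

theorem nonneg_of_forall_le_natCast_mul {R : Type*} [Ring R] [LinearOrder R]
    [IsStrictOrderedRing R] [Archimedean R] {a c : R} (h : ∀ k : ℕ, 1 ≤ k → a ≤ k * c) :
    0 ≤ c := by
  by_contra! hc
  obtain ⟨k, hk⟩ := Archimedean.arch (-a) (neg_pos.2 hc)
  have hle := h (k + 1) k.succ_pos
  rw [nsmul_eq_mul, mul_neg, neg_le_neg_iff] at hk
  rw [Nat.cast_succ, add_one_mul] at hle
  exact hc.not_ge (le_add_iff_nonneg_right _ |>.1 (hk.trans hle))

theorem lexLt_snoc_iff {n : ℕ} (x y : Fin n → ℤ) (a b : ℤ) :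
    lexLt (Fin.snoc x a : Fin (n + 1) → ℤ) (Fin.snoc y b) ↔ a < b ∨ a = b ∧ lexLt x y := by
  simp only [lexLt, Fin.exists_fin_succ', Fin.forall_fin_succ', Fin.snoc_castSucc, Fin.snoc_last,
    Fin.castSucc_lt_castSucc_iff, Fin.castSucc_lt_last, (Fin.le_last _).not_gt,
    IsEmpty.forall_iff, and_true, true_implies, implies_true]
  constructor
  · rintro (⟨i, hi, hj, rfl⟩ | hab)
    · exact Or.inr ⟨rfl, i, hi, hj⟩
    · exact Or.inl hab
  · rintro (hab | ⟨rfl, i, hi, hj⟩)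
    · exact Or.inr hab
    · exact Or.inl ⟨i, hi, hj, rfl⟩

theorem lexLt_zero_snoc_iff {n : ℕ} (x : Fin n → ℤ) (a : ℤ) :
    lexLt 0 (Fin.snoc x a : Fin (n + 1) → ℤ) ↔ 0 < a ∨ a = 0 ∧ lexLt 0 x := by
  rw [← Fin.snoc_zero_zero, lexLt_snoc_iff, eq_comm (a := (0 : ℤ))]

theorem lexLt_zero_iff_pos (l : Fin 1 → ℤ) : lexLt 0 l ↔ 0 < l 0 := by
  simp [lexLt]

theorem snoc_mem_Zset_iff {n : ℕ} (lam : Lambda (n + 1)) (x : Fin (n + 1) → ℤ) (a : ℤ) :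
    Fin.snoc x a ∈ Zset (n + 1) lam ↔ lam.2 ≤ a ∧ x ∈ Zset n (lam.1 a) := by
  simp [Zset, Fin.init_snoc]

theorem exists_mem_Zset : ∀ (n : ℕ) (x : Fin (n + 1) → ℤ), ∃ lam, x ∈ Zset n lam
  | 0, x => ⟨x 0, show x 0 ≤ x 0 from le_rfl⟩
  | n + 1, x => by
    obtain ⟨mu, hmu⟩ := exists_mem_Zset n (Fin.init x)
    exact ⟨(fun _ => mu, x (Fin.last (n + 1))), le_rfl, hmu⟩

def MultiplesInZset (n : ℕ) (l : Fin (n + 1) → ℤ) : Prop :=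
  ∃ lam : Lambda n, ∀ k : ℕ, 1 ≤ k → (k : ℤ) • l ∈ Zset n lam

theorem multiplesInZset_zero_iff (l : Fin 1 → ℤ) : MultiplesInZset 0 l ↔ 0 ≤ l 0 := by
  constructor
  · rintro ⟨lam, h⟩
    exact nonneg_of_forall_le_natCast_mul h
  · intro hl
    exact ⟨0, fun k _ => mul_nonneg k.cast_nonneg hl⟩

theorem nonneg_of_multiplesInZset_snoc {n : ℕ} {x : Fin (n + 1) → ℤ} {a : ℤ}
    (h : MultiplesInZset (n + 1) (Fin.snoc x a)) : 0 ≤ a := by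
  obtain ⟨lam, h⟩ := h
  refine nonneg_of_forall_le_natCast_mul (a := lam.2) fun k hk => ?_
  simpa [Fin.smul_snoc, snoc_mem_Zset_iff] using (h k hk).1

theorem multiplesInZset_snoc_of_pos {n : ℕ} (x : Fin (n + 1) → ℤ) {a : ℤ} (ha : 0 < a) :
    MultiplesInZset (n + 1) (Fin.snoc x a) := by
  choose cover hcover using exists_mem_Zset n
  refine ⟨(fun m => cover ((m / a) • x), a), fun k hk => ?_⟩
  rw [Fin.smul_snoc, snoc_mem_Zset_iff, smul_eq_mul]
  dsimp only
  rw [Int.mul_ediv_cancel _ ha.ne']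
  exact ⟨le_mul_of_one_le_left ha.le (by exact_mod_cast hk), hcover _⟩

theorem multiplesInZset_snoc_zero_iff {n : ℕ} (x : Fin (n + 1) → ℤ) :
    MultiplesInZset (n + 1) (Fin.snoc x 0) ↔ MultiplesInZset n x := by
  simp only [MultiplesInZset, Fin.smul_snoc, snoc_mem_Zset_iff, smul_zero]
  constructor
  · rintro ⟨lam, h⟩
    exact ⟨lam.1 0, fun k hk => (h k hk).2⟩
  · rintro ⟨mu, h⟩
    exact ⟨(fun _ => mu, 0), fun k hk => ⟨le_rfl, h k hk⟩⟩

theorem multiplesInZset_snoc_iff {n : ℕ} (x : Fin (n + 1) → ℤ) (a : ℤ) :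
    MultiplesInZset (n + 1) (Fin.snoc x a) ↔ 0 < a ∨ a = 0 ∧ MultiplesInZset n x := by
  rcases lt_trichotomy a 0 with ha | rfl | ha
  · refine iff_of_false (fun h => ha.not_ge (nonneg_of_multiplesInZset_snoc h)) ?_
    rintro (h | ⟨h, -⟩) <;> omega
  · simp [multiplesInZset_snoc_zero_iff]
  · simp [ha, multiplesInZset_snoc_of_pos]

/-- An element `l ∈ ℤⁿ` is lexicographically positive iff `l ≠ 0` and there is
`λ ∈ Λₙ` such that all positive multiples `k·l` lie in `ℤⁿ_λ`. -/
theorem lexPos_iff_multiples_in_Zset (n : ℕ) (l : Fin (n + 1) → ℤ) :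
    lexLt 0 l ↔ l ≠ 0 ∧ ∃ lam : Lambda n,
      ∀ k : ℕ, 1 ≤ k → (fun i => (k : ℤ) * l i) ∈ Zset n lam := by
  change lexLt 0 l ↔ l ≠ 0 ∧ MultiplesInZset n l
  induction n with
  | zero =>
    rw [lexLt_zero_iff_pos, multiplesInZset_zero_iff, Ne, funext_iff, Fin.forall_fin_one]
    exact ⟨fun h => ⟨h.ne', h.le⟩, fun ⟨hne, hle⟩ => lt_of_le_of_ne hle (Ne.symm hne)⟩
  | succ n ih =>
    obtain ⟨x, a, rfl⟩ : ∃ x a, l = Fin.snoc x a := ⟨_, _, (Fin.snoc_init_self l).symm⟩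
    rw [lexLt_zero_snoc_iff, ih, multiplesInZset_snoc_iff]
    by_cases ha : a = 0 <;> simp [ha, Fin.snoc_eq_zero_iff]
end

section
/- Let A be a commutative ring and f ∈ A((t)) a Laurent series of the form f = c(1 + g) where c ∈ A is invertible, g ∈ A((t)) with constant coefficient zero and with the negative part Σ_{l<0} a_l t^l nilpotent in A((t)). Then the set of supports of all integer powers f^k (k ∈ ℤ) is uniformly bounded below: there exists N ∈ ℤ such that for every k ∈ ℤ, the coefficient of t^l in f^k vanishes for all l < N. -/
open HahnSeries

/-- The strictly negative part `Σ_{l<0} aₗ tˡ` of a Laurent series. -/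
def negPart {A : Type*} [CommRing A] (g : LaurentSeries A) : LaurentSeries A where
  coeff := fun l => if l < 0 then g.coeff l else 0
  isPWO_support' := by
    refine g.isPWO_support.mono fun l hl => ?_
    simp only [Function.mem_support] at hl ⊢
    intro h0
    apply hl
    simp [h0]

/-!
Write `g = G + g₊` with `G = negPart g`, `G ^ m = 0`, and `g₊` a power series without constant
term. Elements of the `A⟦X⟧`-algebra `A⟦X⟧[G]` are polynomials in `G` with power-series
coefficients, so their orders are all at least `m · min (ord G) 0`. In that algebra
`f = c (1 + g₊) + c G` is a unit power series plus a nilpotent, hence a unit, so every `f ^ k`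
with `k ∈ ℤ` lies in `A⟦X⟧[G]`.
-/

open scoped PowerSeries LaurentSeries

theorem IsUnit.val_unit_zpow_mem {M S : Type*} [Monoid M] [SetLike S M] [SubmonoidClass S M]
    {s : S} {y : s} (hy : IsUnit y) (hu : IsUnit (y : M)) (k : ℤ) :
    ((hu.unit ^ k : Mˣ) : M) ∈ s := by
  have : hu.unit = Units.map (SubmonoidClass.subtype s) hy.unit := Units.ext rfl
  rw [this, ← map_zpow]
  exact (hy.unit ^ k : sˣ).val.prop

namespace LaurentSeries

theorem zero_le_orderTop_coe {A : Type*} [Semiring A] (p : A⟦X⟧) :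
    0 ≤ (p : A⸨X⸩).orderTop :=
  le_orderTop_iff_forall.2 fun j hj => by
    rw [PowerSeries.coeff_coe, if_pos (by exact_mod_cast hj)]

theorem exists_le_orderTop_of_mem_adjoin {A : Type*} [CommSemiring A] {G : A⸨X⸩}
    (hG : IsNilpotent G) :
    ∃ N : ℤ, ∀ h ∈ Algebra.adjoin A⟦X⟧ {G}, (N : WithTop ℤ) ≤ h.orderTop := by
  obtain ⟨m, hm⟩ := hG
  obtain ⟨o, ho0, hoG⟩ : ∃ o : ℤ, o ≤ 0 ∧ (o : WithTop ℤ) ≤ G.orderTop := by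
    induction G.orderTop using WithTop.recTopCoe with
    | top => exact ⟨0, le_rfl, le_top⟩
    | coe a => exact ⟨min a 0, min_le_right _ _, by exact_mod_cast min_le_left _ _⟩
  have hpow : ∀ i : ℕ, ((m * o : ℤ) : WithTop ℤ) ≤ (G ^ i).orderTop := by
    intro i
    rcases lt_or_ge i m with hi | hi
    · calc ((m * o : ℤ) : WithTop ℤ) ≤ ((i * o : ℤ) : WithTop ℤ) := by
            exact_mod_cast mul_le_mul_of_nonpos_right (by exact_mod_cast hi.le) ho0
        _ = i • (o : WithTop ℤ) := by norm_cast
        _ ≤ i • G.orderTop := nsmul_le_nsmul_right hoG i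
        _ ≤ (G ^ i).orderTop := orderTop_nsmul_le_orderTop_pow
    · rw [pow_eq_zero_of_le hi hm, orderTop_zero]
      exact le_top
  refine ⟨m * o, fun h hh => ?_⟩
  rw [Algebra.adjoin_singleton_eq_range_aeval] at hh
  obtain ⟨p, rfl⟩ := hh
  rw [AlgHom.toRingHom_eq_coe, RingHom.coe_coe]
  induction p using Polynomial.induction_on' with
  | add p q hp hq =>
    rw [map_add]
    exact le_min hp hq |>.trans min_orderTop_le_orderTop_add
  | monomial i a =>
    rw [Polynomial.aeval_monomial, coe_algebraMap]
    calc ((m * o : ℤ) : WithTop ℤ) = 0 + ((m * o : ℤ) : WithTop ℤ) := (zero_add _).symm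
      _ ≤ (a : A⸨X⸩).orderTop + (G ^ i).orderTop :=
          add_le_add (zero_le_orderTop_coe a) (hpow i)
      _ ≤ _ := orderTop_add_le_mul

variable {A : Type*} [CommRing A]

theorem negPart_add_coe (g : A⸨X⸩) :
    negPart g + (PowerSeries.mk fun n => g.coeff n : A⟦X⟧) = g := by
  ext l
  rw [coeff_add, PowerSeries.coeff_coe]
  by_cases hl : l < 0
  · simp [_root_.negPart, hl]
  · simp [_root_.negPart, hl, Int.natAbs_of_nonneg (not_lt.1 hl)]

theorem exists_isUnit_adjoin_negPart_coe_eq {c : A} (hc : IsUnit c) {g : A⸨X⸩}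
    (hg0 : g.coeff 0 = 0) (hgnil : IsNilpotent (negPart g)) :
    ∃ y : Algebra.adjoin A⟦X⟧ {negPart g}, IsUnit y ∧ (y : A⸨X⸩) = C c * (1 + g) := by
  set R := Algebra.adjoin A⟦X⟧ {negPart g}
  set P : A⟦X⟧ := PowerSeries.C c * (1 + PowerSeries.mk fun n => g.coeff n)
  have hP : IsUnit P := by
    rw [PowerSeries.isUnit_iff_constantCoeff]
    simpa [P, hg0] using hc
  have hGR : IsNilpotent (⟨negPart g, Algebra.self_mem_adjoin_singleton _ _⟩ : R) :=
    (IsNilpotent.map_iff (f := R.val) Subtype.val_injective).1 hgnil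
  have hnil : IsNilpotent (algebraMap A⟦X⟧ R (PowerSeries.C c) * ⟨negPart g, _⟩) :=
    (Commute.all _ _).isNilpotent_mul_left hGR
  have hunit :
      IsUnit (algebraMap A⟦X⟧ R P + algebraMap A⟦X⟧ R (PowerSeries.C c) * ⟨negPart g, _⟩) :=
    hnil.isUnit_add_left_of_commute (hP.map _) (Commute.all _ _)
  refine ⟨_, hunit, ?_⟩
  conv_rhs => rw [← negPart_add_coe g]
  simp only [P, map_mul, map_add, map_one, AddMemClass.coe_add, MulMemClass.coe_mul,
    SubalgebraClass.coe_algebraMap, OneMemClass.coe_one, coe_algebraMap, ofPowerSeries_C]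
  ring

end LaurentSeries

open LaurentSeries in
/-- Let `f = c(1 + g)` with `c ∈ A*`, where `g` has zero constant coefficient and
nilpotent negative part. Then the supports of all integer powers of `f` are uniformly
bounded below: there is `N` such that for every `k ∈ ℤ` the coefficients of `f^k`
vanish below `N`. -/
theorem powers_uniformly_bounded_below {A : Type*} [CommRing A]
    (c : A) (hc : IsUnit c) (g : LaurentSeries A)
    (hg0 : g.coeff 0 = 0) (hgnil : IsNilpotent (negPart g))
    (f : LaurentSeries A) (hf : f = HahnSeries.C c * (1 + g)) (hu : IsUnit f) :
    ∃ N : ℤ, ∀ (k : ℤ) (l : ℤ), l < N →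
      ((hu.unit ^ k : (LaurentSeries A)ˣ) : LaurentSeries A).coeff l = 0 := by
  obtain ⟨N, hN⟩ := exists_le_orderTop_of_mem_adjoin hgnil
  obtain ⟨y, hy, hyf⟩ := exists_isUnit_adjoin_negPart_coe_eq hc hg0 hgnil
  obtain rfl : (y : A⸨X⸩) = f := hyf.trans hf.symm
  refine ⟨N, fun k l hl => coeff_eq_zero_of_lt_orderTop ?_⟩
  exact (WithTop.coe_lt_coe.2 hl).trans_le (hN _ (hy.val_unit_zpow_mem hu k))
end

section
/- Let A be a commutative ring. The residue pairing A((t)) × A((t)) → A, (f, g) ↦ res(f g dt) := coefficient of t^{-1} in fg, is perfect in the following sense: the induced map from A((t)) to the A-module of A-linear functionals χ : A((t)) → A satisfying χ(t^l A[[t]]) = 0 for some l (i.e. continuous functionals), sending f to (g ↦ [fg]_{-1}), is an isomorphism of A-modules. -/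
/-!
Pairing `f` with the monomial `c tᵐ` reads off `c f₋₁₋ₘ`, so `f` is determined by its pairings.
A continuous functional `χ` is determined by its values on monomials: it kills the tail
`tᵉ A[[t]]` of any series, and what remains below `tᵉ` is a finite sum of monomials.
Continuity also makes `χ(t⁻¹⁻ⁱ)` vanish for `i ≪ 0`, so these values are the coefficients of a
Laurent series `f`, and `g ↦ [fg]₋₁` agrees with `χ` on monomials.
-/

open HahnSeries

/-- An `A`-linear functional `χ : A((t)) → A` is continuous (for the topology with base of
neighborhoods of zero `tˡA[[t]]`, `l ∈ ℤ`, and the discrete topology on `A`) iff it kills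
some `tˡA[[t]]`, i.e. kills all series whose coefficients vanish below some bound `e`. -/
def IsContFunctional {A : Type*} [CommRing A] (χ : LaurentSeries A →ₗ[A] A) : Prop :=
  ∃ e : ℤ, ∀ f : LaurentSeries A, (∀ i : ℤ, i < e → f.coeff i = 0) → χ f = 0

namespace HahnSeries

variable {Γ R : Type*}

theorem eq_sum_single_of_support_subset [PartialOrder Γ] [AddCommMonoid R] {x : R⟦Γ⟧}
    {s : Finset Γ} (h : x.support ⊆ s) : x = ∑ j ∈ s, single j (x.coeff j) := by
  ext k
  rw [coeff_sum, Finset.sum_eq_single k (fun j _ hjk => coeff_single_of_ne hjk.symm) fun hk => by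
    rw [coeff_single_same, ← Function.notMem_support]; exact fun hk' => hk (h hk'),
    coeff_single_same]

theorem single_eq_smul_single_one [PartialOrder Γ] [Semiring R] (a : Γ) (r : R) :
    single a r = r • (single a 1 : R⟦Γ⟧) := by
  ext k
  by_cases hk : k = a <;> simp [hk]

theorem support_truncLT_subset_Ico [Zero Γ] [LinearOrder Γ] [LocallyFiniteOrder Γ] [Zero R]
    (c : Γ) (x : R⟦Γ⟧) : (truncLT c x).support ⊆ Finset.Ico x.order c := by
  intro y hy
  rw [support_truncLT] at hy
  obtain ⟨hy, hyc⟩ := hy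
  rw [Finset.coe_Ico]
  exact ⟨not_lt.1 fun h => hy (coeff_eq_zero_of_lt_order h), hyc⟩

theorem coeff_mul_eq_zero_of_lt [AddCommMonoid Γ] [LinearOrder Γ] [IsOrderedCancelAddMonoid Γ]
    [NonUnitalNonAssocSemiring R] {x y : R⟦Γ⟧} {a b n : Γ}
    (hx : ∀ i < a, x.coeff i = 0) (hy : ∀ j < b, y.coeff j = 0) (hn : n < a + b) :
    (x * y).coeff n = 0 := by
  apply coeff_eq_zero_of_lt_orderTop
  calc (n : WithTop Γ) < a + b := by exact_mod_cast hn
    _ ≤ x.orderTop + y.orderTop :=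
      add_le_add (le_orderTop_iff_forall.2 fun i hi => hx i (by exact_mod_cast hi))
        (le_orderTop_iff_forall.2 fun j hj => hy j (by exact_mod_cast hj))
    _ ≤ (x * y).orderTop := orderTop_add_le_mul

end HahnSeries

section ResiduePairing

variable {A : Type*} [CommRing A]

noncomputable def residuePairing : LaurentSeries A →ₗ[A] LaurentSeries A →ₗ[A] A :=
  LinearMap.mk₂ A (fun f g => (f * g).coeff (-1))
    (fun _ _ _ => by rw [add_mul, coeff_add])
    (fun _ _ _ => by rw [← single_zero_mul_eq_smul, mul_assoc, coeff_single_zero_mul]; rfl)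
    (fun _ _ _ => by rw [mul_add, coeff_add])
    (fun _ _ _ => by rw [← single_zero_mul_eq_smul, mul_left_comm, coeff_single_zero_mul]; rfl)

theorem residuePairing_apply (f g : LaurentSeries A) :
    residuePairing f g = (f * g).coeff (-1) :=
  rfl

theorem residuePairing_single (f : LaurentSeries A) (m : ℤ) (c : A) :
    residuePairing f (single m c) = f.coeff (-1 - m) * c := by
  rw [residuePairing_apply]
  simpa using coeff_mul_single_add (x := f) (r := c) (a := -1 - m) (b := m)

theorem isContFunctional_residuePairing (f : LaurentSeries A) :
    IsContFunctional (residuePairing f) :=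
  ⟨-f.order, fun _ hg => coeff_mul_eq_zero_of_lt (fun _ => coeff_eq_zero_of_lt_order) hg
    (by omega)⟩

theorem residuePairing_injective : Function.Injective (residuePairing (A := A)) := by
  refine (injective_iff_map_eq_zero _).2 fun f hf => ?_
  ext i
  simpa [residuePairing_single] using LinearMap.congr_fun hf (single (-1 - i) 1)

theorem IsContFunctional.sub {φ χ : LaurentSeries A →ₗ[A] A} (hφ : IsContFunctional φ)
    (hχ : IsContFunctional χ) : IsContFunctional (φ - χ) := by
  obtain ⟨e₁, h₁⟩ := hφ
  obtain ⟨e₂, h₂⟩ := hχ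
  refine ⟨max e₁ e₂, fun f hf => ?_⟩
  rw [LinearMap.sub_apply, h₁ f fun i hi => hf i (lt_max_of_lt_left hi),
    h₂ f fun i hi => hf i (lt_max_of_lt_right hi), sub_zero]

theorem IsContFunctional.eq_zero_of_map_single {χ : LaurentSeries A →ₗ[A] A}
    (hχ : IsContFunctional χ) (h : ∀ m c, χ (single m c) = 0) : χ = 0 := by
  obtain ⟨e, he⟩ := hχ
  ext g
  have htail : χ (g - truncLT e g) = 0 :=
    he _ fun i hi => by rw [coeff_sub, coeff_truncLT_of_lt hi, sub_self]
  have hhead : χ (truncLT e g) = 0 := by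
    rw [eq_sum_single_of_support_subset (support_truncLT_subset_Ico e g), map_sum]
    exact Finset.sum_eq_zero fun j _ => h j _
  rwa [map_sub, hhead, sub_zero] at htail

theorem IsContFunctional.ext {φ χ : LaurentSeries A →ₗ[A] A} (hφ : IsContFunctional φ)
    (hχ : IsContFunctional χ) (h : ∀ m c, φ (single m c) = χ (single m c)) : φ = χ :=
  sub_eq_zero.1 <| (hφ.sub hχ).eq_zero_of_map_single fun m c => by
    rw [LinearMap.sub_apply, h, sub_self]

theorem IsContFunctional.bddBelow_support {χ : LaurentSeries A →ₗ[A] A}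
    (hχ : IsContFunctional χ) :
    BddBelow (Function.support fun i : ℤ => χ (single (-1 - i) 1)) := by
  obtain ⟨e, he⟩ := hχ
  refine ⟨-e, fun i hi => ?_⟩
  by_contra! hlt
  exact hi (he _ fun k hk => coeff_single_of_ne (by omega))

theorem exists_residuePairing_eq {χ : LaurentSeries A →ₗ[A] A} (hχ : IsContFunctional χ) :
    ∃ f, residuePairing f = χ := by
  refine ⟨ofSuppBddBelow _ hχ.bddBelow_support,
    (isContFunctional_residuePairing _).ext hχ fun m c => ?_⟩
  rw [residuePairing_single, coeff_ofSuppBddBelow, sub_sub_cancel, mul_comm, ← smul_eq_mul,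
    ← map_smul, ← single_eq_smul_single_one]

end ResiduePairing

/-- Self-duality of `A((t))` via the residue pairing `(f, g) ↦ [fg]₋₁`: the `A`-linear
map `τ : f ↦ (g ↦ [fg]₋₁)` takes values in continuous functionals, is injective, and
every continuous `A`-linear functional is `τ f` for a unique `f`. -/
theorem residue_pairing_perfect {A : Type*} [CommRing A] :
    ∃ τ : LaurentSeries A →ₗ[A] (LaurentSeries A →ₗ[A] A),
      (∀ f g : LaurentSeries A, τ f g = (f * g).coeff (-1)) ∧
      (∀ f : LaurentSeries A, IsContFunctional (τ f)) ∧
      Function.Injective τ ∧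
      (∀ χ : LaurentSeries A →ₗ[A] A, IsContFunctional χ → ∃ f, τ f = χ) :=
  ⟨residuePairing, residuePairing_apply, isContFunctional_residuePairing,
    residuePairing_injective, fun _ => exists_residuePairing_eq⟩
end

section
/- Let k be a field of characteristic zero and F ∈ k((t)) a Laurent series with ν(F) = -1 (i.e. F = c t^{-1} + higher order terms with c ≠ 0) such that F ≠ c t^{-1}. Then the generating series Σ_{l ≥ 1} [F^l]₀ t^l of constant terms of powers of F is not identically zero, i.e. there exists l ≥ 1 with [F^l]₀ ≠ 0. -/
/-!
Write `F = c t⁻¹ + B`; then `B ≠ 0` is a power series, say of order `n`. In the binomial expansion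
of `(c t⁻¹ + B) ^ (n + 1)` the term `c ^ i t⁻ⁱ B ^ (n + 1 - i)` contributes `c ^ i [B ^ (n + 1 - i)]ᵢ`
to the constant term. For `i < n` this vanishes since `B ^ (n + 1 - i)` has order at least
`(n + 1 - i) n ≥ 2n > i`, and for `i = n + 1` it is `[1]ₙ₊₁ = 0`. Only `i = n` survives, giving
`[F ^ (n + 1)]₀ = (n + 1) cⁿ [B]ₙ ≠ 0` in characteristic zero.
-/

open HahnSeries

namespace LaurentSeries

theorem exists_nat_coeff_ne_zero_of_coeff_neg_eq_zero {R : Type*} [Zero R]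
    {x : LaurentSeries R} (hx : x ≠ 0) (h : ∀ j < 0, x.coeff j = 0) :
    ∃ n : ℕ, x.coeff n ≠ 0 ∧ ∀ j < (n : ℤ), x.coeff j = 0 := by
  have h0 : 0 ≤ x.order := (le_order_iff_forall hx).mpr h
  refine ⟨x.order.toNat, ?_, fun j hj => coeff_eq_zero_of_lt_order ?_⟩
  · rw [Int.toNat_of_nonneg h0]
    exact mt coeff_order_eq_zero.mp hx
  · rwa [Int.toNat_of_nonneg h0] at hj

variable {R : Type*} [CommRing R]

theorem coeff_pow_eq_zero_of_lt_mul {B : LaurentSeries R} {n : ℤ}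
    (hB : ∀ j < n, B.coeff j = 0) (m : ℕ) {j : ℤ} (hj : j < m * n) : (B ^ m).coeff j = 0 := by
  refine coeff_eq_zero_of_lt_orderTop (lt_of_lt_of_le ?_ orderTop_nsmul_le_orderTop_pow)
  calc (j : WithTop ℤ) < m • (n : WithTop ℤ) := by rw [← WithTop.coe_nsmul]; exact_mod_cast hj
    _ ≤ m • B.orderTop :=
      nsmul_le_nsmul_right (le_orderTop_iff_forall.mpr fun i hi => hB i (mod_cast hi)) m

theorem coeff_zero_single_neg_one_pow_mul (c : R) (i : ℕ) (x : LaurentSeries R) :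
    (single (-1) c ^ i * x).coeff 0 = c ^ i * x.coeff i := by
  rw [single_pow, coeff_single_mul]
  simp

theorem coeff_zero_single_neg_one_add_pow (c : R) (B : LaurentSeries R) (l : ℕ) :
    ((single (-1) c + B) ^ l).coeff 0 =
      ∑ i ∈ Finset.range (l + 1), (l.choose i : R) * (c ^ i * (B ^ (l - i)).coeff i) := by
  rw [add_pow, ← coeff.addMonoidHom_apply, map_sum]
  refine Finset.sum_congr rfl fun i _ => ?_
  rw [coeff.addMonoidHom_apply, ← map_natCast (C : R →+* LaurentSeries R), C_apply,
    mul_comm, coeff_single_mul, sub_zero, ← coeff_zero_single_neg_one_pow_mul]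

theorem coeff_zero_single_neg_one_add_pow_succ (c : R) {B : LaurentSeries R} {n : ℕ}
    (hB : ∀ j < (n : ℤ), B.coeff j = 0) :
    ((single (-1) c + B) ^ (n + 1)).coeff 0 = (n + 1) * c ^ n * B.coeff n := by
  rw [coeff_zero_single_neg_one_add_pow, Finset.sum_eq_single n]
  · simp [mul_assoc]
  · intro i hi hin
    rcases (Finset.mem_range_succ_iff.mp hi).lt_or_eq with hi | rfl
    · refine mul_eq_zero_of_right _ (mul_eq_zero_of_right _ (coeff_pow_eq_zero_of_lt_mul hB _ ?_))
      have hi : i < (n + 1 - i) * n :=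
        calc i < 2 * n := by omega
          _ ≤ (n + 1 - i) * n := Nat.mul_le_mul_right n (by omega)
      exact_mod_cast hi
    · rw [Nat.sub_self, pow_zero, coeff_one, if_neg (by omega), mul_zero, mul_zero]
  · simp

end LaurentSeries

/-- Let `k` be a field of characteristic zero and `F ∈ k((t))` with `ν(F) = -1`
(the coefficient of `t⁻¹` is nonzero and all lower coefficients vanish) and
`F ≠ c·t⁻¹`. Then some power `Fˡ`, `l ≥ 1`, has nonzero constant term, i.e. the
generating series `Σ_{l≥1} [Fˡ]₀ tˡ` is nonzero. -/
theorem generating_series_of_constant_terms_ne_zero {k : Type*} [Field k] [CharZero k]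
    (F : LaurentSeries k) (hlead : F.coeff (-1) ≠ 0)
    (hlow : ∀ l : ℤ, l < -1 → F.coeff l = 0)
    (hne : F ≠ HahnSeries.single (-1) (F.coeff (-1))) :
    ∃ l : ℕ, 1 ≤ l ∧ (F ^ l).coeff 0 ≠ 0 := by
  set c := F.coeff (-1)
  have hB : ∀ j < 0, (F - single (-1) c).coeff j = 0 := by
    intro j hj
    obtain rfl | hj' := eq_or_ne j (-1)
    · simp [c]
    · simp [coeff_single_of_ne hj', hlow j (by omega)]
  obtain ⟨n, hn, hBlow⟩ :=
    LaurentSeries.exists_nat_coeff_ne_zero_of_coeff_neg_eq_zero (sub_ne_zero.mpr hne) hB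
  refine ⟨n + 1, Nat.le_add_left 1 n, ?_⟩
  rw [← add_sub_cancel (single (-1) c) F,
    LaurentSeries.coeff_zero_single_neg_one_add_pow_succ c hBlow]
  exact mul_ne_zero (mul_ne_zero (Nat.cast_add_one_ne_zero n) (pow_ne_zero n hlead)) hn
end

section
/- Let A be a commutative ring and φ : A((t)) → A((t)) the continuous A-algebra endomorphism with φ(t) = ψ where ψ ∈ A((t))*, ν(ψ) ≥ 1. Suppose the image of ν(ψ) ∈ ℤ in A is not a zero divisor. Then φ is injective. -/
/-!
Let `θ = t d/dt` and, for a unit `u`, `dlog u = u⁻¹ θu`; the residue of `h ψ' dt / ψ` is the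
constant coefficient of `h · dlog ψ`. For a unit `u` the constant coefficient of `u ^ j θu`
vanishes when `j ≠ -1`: for `j ≥ 0` it is that of `θ(u ^ (j + 1)) / (j + 1)`, which makes sense
once `u` is lifted to a generic series over the torsion-free ring `ℤ[X_g]`, and `j ≤ -2` is the
same statement for `u⁻¹`. As `φ (t ^ l) = ψ ^ l` and `φ` is continuous, the constant coefficient
of `φ h · dlog ψ` is therefore `(dlog ψ)₀ · h₀`. Writing `ψ = t ^ ν · U · (1 + m)` with `U` a unit
power series and `m` nilpotent gives `(dlog ψ)₀ = ν + 0 + 0`, so `φ f = 0` forces `ν · f_k = 0`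
for every `k` (take `h = t ^ (-k) · f`).
-/

open HahnSeries

/-- Continuity at `0` for the topology on `A((t))` with base of neighborhoods of zero
given by the submodules `tˡA[[t]]`, `l ∈ ℤ`. -/
def IsContMap {A : Type*} [CommRing A] (φ : LaurentSeries A → LaurentSeries A) : Prop :=
  ∀ d : ℤ, ∃ e : ℤ, ∀ f : LaurentSeries A,
    (∀ i : ℤ, i < e → f.coeff i = 0) → ∀ i : ℤ, i < d → (φ f).coeff i = 0

namespace HahnSeries

section Euler

variable {Γ R : Type*} [PartialOrder Γ] [AddCommMonoid Γ] [IsOrderedCancelAddMonoid Γ]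
  [CommRing R]

/-- For Laurent series and `w = id` this is `t d/dt`. -/
def eulerDeriv (w : Γ →+ ℤ) : Derivation R R⟦Γ⟧ R⟦Γ⟧ where
  toFun x :=
    { coeff := fun g => w g • x.coeff g
      isPWO_support' := x.isPWO_support.mono fun g hg h => hg (by simp [h]) }
  map_add' x y := by ext; simp [smul_add]
  map_smul' r x := by ext; simp; ring
  map_one_eq_zero' := by
    ext g
    simp only [LinearMap.coe_mk, AddHom.coe_mk, coeff_one, coeff_zero]
    split_ifs with h <;> simp [h]
  leibniz' x y := by
    have hsupp (z : R⟦Γ⟧) (h) :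
        (HahnSeries.mk (fun g => w g • z.coeff g) h).support ⊆ z.support :=
      fun g hg h => hg (by simp [h])
    ext g
    simp only [LinearMap.coe_mk, AddHom.coe_mk, smul_eq_mul, coeff_add]
    rw [mul_comm y, coeff_mul_right' y.isPWO_support (hsupp y _),
      coeff_mul_left' x.isPWO_support (hsupp x _), coeff_mul, Finset.smul_sum,
      ← Finset.sum_add_distrib]
    refine Finset.sum_congr rfl fun ij hij => ?_
    rw [← (Finset.mem_antidiagonal.mp hij).2.2, map_add]
    simp only [zsmul_eq_mul, Int.cast_add]
    ring

@[simp]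
theorem coeff_eulerDeriv (w : Γ →+ ℤ) (x : R⟦Γ⟧) (g : Γ) :
    (eulerDeriv w x).coeff g = w g • x.coeff g := rfl

@[simp]
theorem eulerDeriv_single (w : Γ →+ ℤ) (g : Γ) (r : R) :
    eulerDeriv w (single g r) = single g (w g • r) := by
  ext i
  by_cases h : i = g <;> simp [h]

theorem coeff_zero_eulerDeriv (w : Γ →+ ℤ) (x : R⟦Γ⟧) : (eulerDeriv w x).coeff 0 = 0 := by
  simp

/-- Defined for `eulerDeriv` only, not for an arbitrary derivation: on `LaurentSeries A` the
instance `Algebra A A⸨X⸩` found by search goes through `PowerSeries A` and is not defeq to the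
one `eulerDeriv` is built with. -/
noncomputable def eulerLogDeriv (w : Γ →+ ℤ) (u : R⟦Γ⟧ˣ) : R⟦Γ⟧ :=
  ((u⁻¹ : R⟦Γ⟧ˣ) : R⟦Γ⟧) * eulerDeriv w (u : R⟦Γ⟧)

theorem eulerLogDeriv_mul (w : Γ →+ ℤ) (u v : R⟦Γ⟧ˣ) :
    eulerLogDeriv w (u * v) = eulerLogDeriv w u + eulerLogDeriv w v := by
  simp only [eulerLogDeriv, mul_inv_rev, Units.val_mul, Derivation.leibniz, smul_eq_mul]
  linear_combination (↑v⁻¹ * eulerDeriv w v) * u.inv_mul + (↑u⁻¹ * eulerDeriv w u) * v.inv_mul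

end Euler

section Map

variable {Γ R S : Type*} [PartialOrder Γ] [AddCommMonoid Γ] [IsOrderedCancelAddMonoid Γ]
  [CommRing R] [CommRing S]

def mapRingHom (f : R →+* S) : R⟦Γ⟧ →+* S⟦Γ⟧ where
  toFun x := x.map f
  map_one' := by
    ext g
    simp only [map_coeff, coeff_one]
    split_ifs <;> simp
  map_mul' _ _ := HahnSeries.map_mul f.toNonUnitalRingHom
  map_zero' := HahnSeries.map_zero f.toZeroHom
  map_add' _ _ := HahnSeries.map_add f.toAddMonoidHom

@[simp]
theorem coeff_mapRingHom (f : R →+* S) (x : R⟦Γ⟧) (g : Γ) :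
    (mapRingHom f x).coeff g = f (x.coeff g) := rfl

theorem eulerDeriv_mapRingHom (w : Γ →+ ℤ) (f : R →+* S) (x : R⟦Γ⟧) :
    eulerDeriv w (mapRingHom f x) = mapRingHom f (eulerDeriv w x) := by
  ext g
  simp

theorem exists_mapRingHom_eq (x : R⟦Γ⟧) :
    ∃ (x' : (MvPolynomial Γ ℤ)⟦Γ⟧) (f : MvPolynomial Γ ℤ →+* R), mapRingHom f x' = x := by
  classical
  refine ⟨⟨fun g => if x.coeff g = 0 then 0 else .X g, x.isPWO_support.mono fun g hg h => hg ?_⟩,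
    MvPolynomial.eval₂Hom (Int.castRingHom R) x.coeff, ?_⟩
  · simp [h]
  · ext g
    by_cases h : x.coeff g = 0 <;> simp [h]

end Map

section Residue

variable {Γ R : Type*} [PartialOrder Γ] [AddCommMonoid Γ] [IsOrderedCancelAddMonoid Γ]
  [CommRing R]

theorem coeff_zero_pow_mul_eulerDeriv_of_isAddTorsionFree [IsAddTorsionFree R] (w : Γ →+ ℤ)
    (x : R⟦Γ⟧) (k : ℕ) : (x ^ k * eulerDeriv w x).coeff 0 = 0 := by
  have h := coeff_zero_eulerDeriv w (x ^ (k + 1))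
  rw [Derivation.leibniz_pow, Nat.add_sub_cancel, coeff_smul, smul_eq_mul] at h
  exact (nsmul_eq_zero_iff_right k.succ_ne_zero).mp h

theorem coeff_zero_pow_mul_eulerDeriv (w : Γ →+ ℤ) (x : R⟦Γ⟧) (k : ℕ) :
    (x ^ k * eulerDeriv w x).coeff 0 = 0 := by
  obtain ⟨x', f, rfl⟩ := exists_mapRingHom_eq x
  rw [eulerDeriv_mapRingHom, ← map_pow, ← map_mul, coeff_mapRingHom,
    coeff_zero_pow_mul_eulerDeriv_of_isAddTorsionFree, map_zero]

theorem coeff_zero_zpow_mul_eulerDeriv (w : Γ →+ ℤ) (u : R⟦Γ⟧ˣ) {j : ℤ} (hj : j ≠ -1) :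
    ((u ^ j : R⟦Γ⟧ˣ) * eulerDeriv w (u : R⟦Γ⟧)).coeff 0 = 0 := by
  rcases lt_or_gt_of_ne hj with hj | hj
  · obtain ⟨n, rfl⟩ : ∃ n : ℕ, j = -(n + 2 : ℕ) := ⟨(-j - 2).toNat, by omega⟩
    have hθu : eulerDeriv w (u : R⟦Γ⟧) = -((u : R⟦Γ⟧) ^ 2 * eulerDeriv w (u⁻¹ : R⟦Γ⟧ˣ)) := by
      rw [(eulerDeriv w).leibniz_of_mul_eq_one u.mul_inv, neg_smul, smul_eq_mul]
    have hpow : ((u ^ (-(n + 2 : ℕ) : ℤ) : R⟦Γ⟧ˣ) : R⟦Γ⟧) * (u : R⟦Γ⟧) ^ 2 =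
        ((u⁻¹ ^ n : R⟦Γ⟧ˣ) : R⟦Γ⟧) := by
      rw [← Units.val_pow_eq_pow_val, ← Units.val_mul]
      congr 1
      push_cast
      group
    rw [hθu, mul_neg, ← mul_assoc, hpow, coeff_neg, Units.val_pow_eq_pow_val,
      coeff_zero_pow_mul_eulerDeriv, neg_zero]
  · obtain ⟨n, rfl⟩ : ∃ n : ℕ, j = n := ⟨j.toNat, by omega⟩
    rw [zpow_natCast, Units.val_pow_eq_pow_val]
    exact coeff_zero_pow_mul_eulerDeriv w _ n

theorem coeff_zero_zpow_mul_eulerLogDeriv (w : Γ →+ ℤ) (u : R⟦Γ⟧ˣ) (j : ℤ) :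
    (((u ^ j : R⟦Γ⟧ˣ) : R⟦Γ⟧) * eulerLogDeriv w u).coeff 0 =
      if j = 0 then (eulerLogDeriv w u).coeff 0 else 0 := by
  split_ifs with hj
  · simp [hj]
  · rw [eulerLogDeriv, ← mul_assoc, ← Units.val_mul, ← zpow_neg_one, ← zpow_add]
    exact coeff_zero_zpow_mul_eulerDeriv w u (by omega)

theorem coeff_zero_eulerLogDeriv_of_isNilpotent (w : Γ →+ ℤ) (u : R⟦Γ⟧ˣ)
    (hu : IsNilpotent ((u : R⟦Γ⟧) - 1)) : (eulerLogDeriv w u).coeff 0 = 0 := by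
  obtain ⟨K, hK⟩ := hu
  set m := (u : R⟦Γ⟧) - 1 with hm
  have hinv : ((u⁻¹ : R⟦Γ⟧ˣ) : R⟦Γ⟧) = ∑ k ∈ Finset.range K, (-m) ^ k := by
    refine Units.inv_eq_of_mul_eq_one_right ?_
    have h := mul_neg_geom_sum (-m) K
    rw [neg_pow, hK, mul_zero, sub_zero, sub_neg_eq_add, hm, add_sub_cancel] at h
    exact h
  have hθ : eulerDeriv w (u : R⟦Γ⟧) = eulerDeriv w m := by
    rw [hm, map_sub, Derivation.map_one_eq_zero, sub_zero]
  rw [eulerLogDeriv, hinv, hθ, Finset.sum_mul, coeff_sum]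
  refine Finset.sum_eq_zero fun k _ => ?_
  rw [neg_pow, mul_assoc]
  rcases neg_one_pow_eq_or R⟦Γ⟧ k with h | h <;>
    simp [h, coeff_zero_pow_mul_eulerDeriv]

end Residue

section Group

variable {Γ R : Type*} [PartialOrder Γ] [AddCommGroup Γ] [IsOrderedAddMonoid Γ] [CommRing R]

noncomputable def unitSingleHom : Multiplicative Γ →* R⟦Γ⟧ˣ where
  toFun g := ⟨single g.toAdd 1, single (-g.toAdd) 1, by simp [single_mul_single],
    by simp [single_mul_single]⟩
  map_one' := Units.ext (by simp)
  map_mul' _ _ := Units.ext (by simp [single_mul_single])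

@[simp]
theorem val_unitSingleHom (g : Multiplicative Γ) :
    ((unitSingleHom g : R⟦Γ⟧ˣ) : R⟦Γ⟧) = single g.toAdd 1 := rfl

@[simp]
theorem val_inv_unitSingleHom (g : Multiplicative Γ) :
    (((unitSingleHom g : R⟦Γ⟧ˣ)⁻¹ : R⟦Γ⟧ˣ) : R⟦Γ⟧) = single (-g.toAdd) 1 := rfl

theorem coeff_zero_eulerLogDeriv_unitSingleHom (w : Γ →+ ℤ) (g : Γ) :
    (eulerLogDeriv w (unitSingleHom (Multiplicative.ofAdd g) : R⟦Γ⟧ˣ)).coeff 0 = w g := by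
  simp [eulerLogDeriv, single_mul_single]

end Group

section LinearOrder

variable {Γ R : Type*} [LinearOrder Γ] [AddCommMonoid Γ] [IsOrderedCancelAddMonoid Γ]
  [CommRing R] {x y : R⟦Γ⟧} {a b : Γ}

theorem coeff_mul_eq_zero_of_lt_add (hx : ∀ i < a, x.coeff i = 0) (hy : ∀ i < b, y.coeff i = 0)
    {g : Γ} (hg : g < a + b) : (x * y).coeff g = 0 := by
  rw [coeff_mul]
  refine Finset.sum_eq_zero fun ij hij => ?_
  obtain ⟨-, -, hsum⟩ := Finset.mem_antidiagonal.mp hij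
  rcases lt_or_ge ij.1 a with h | h
  · rw [hx _ h, zero_mul]
  · have hj : ij.2 < b := by
      by_contra! h'
      exact hg.not_ge (hsum ▸ add_le_add h h')
    rw [hy _ hj, mul_zero]

theorem coeff_mul_add_eq_mul (hx : ∀ i < a, x.coeff i = 0) (hy : ∀ i < b, y.coeff i = 0) :
    (x * y).coeff (a + b) = x.coeff a * y.coeff b := by
  rw [coeff_mul, Finset.sum_eq_single (a, b)]
  · rintro ⟨i, j⟩ hij hne
    obtain ⟨hi, hj, hsum : i + j = a + b⟩ := Finset.mem_antidiagonal.mp hij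
    have ha : a ≤ i := not_lt.mp fun h => hi (hx i h)
    have hb : b ≤ j := not_lt.mp fun h => hj (hy j h)
    have hia : i ≤ a := le_of_add_le_add_right ((add_le_add le_rfl hb).trans_eq hsum)
    have hjb : j ≤ b := le_of_add_le_add_left ((add_le_add ha le_rfl).trans_eq hsum)
    exact absurd (Prod.ext (le_antisymm hia ha) (le_antisymm hjb hb)) hne
  · intro h
    simp only [Finset.mem_antidiagonal, mem_support, ne_eq, and_true, not_and_or, not_not] at h
    rcases h with h | h <;> simp [h]

end LinearOrder

end HahnSeries

namespace LaurentSeries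

variable {A : Type*} [CommRing A]

local notation "dlog" => HahnSeries.eulerLogDeriv (AddMonoidHom.id ℤ)

theorem truncLT_eq_sum_single (x : LaurentSeries A) (N : ℤ) :
    truncLT N x = ∑ l ∈ Finset.Ico x.order N, single l (x.coeff l) := by
  ext i
  rw [HahnSeries.coeff_truncLT, coeff_sum]
  by_cases hi : i ∈ Finset.Ico x.order N
  · rw [Finset.sum_eq_single_of_mem i hi fun l _ hl => coeff_single_of_ne hl.symm,
      coeff_single_same, if_pos (Finset.mem_Ico.mp hi).2]
  · rw [Finset.sum_eq_zero fun l hl => coeff_single_of_ne fun (h : i = l) => hi (h ▸ hl)]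
    rw [Finset.mem_Ico, not_and_or, not_le] at hi
    split_ifs with hN
    · exact coeff_eq_zero_of_lt_order (hi.resolve_right (not_not.mpr hN))
    · rfl

theorem isNilpotent_truncLT (x : LaurentSeries A) {N : ℤ}
    (h : ∀ l < N, IsNilpotent (x.coeff l)) : IsNilpotent (truncLT N x) := by
  rw [truncLT_eq_sum_single]
  refine isNilpotent_sum fun l hl => ?_
  obtain ⟨n, hn⟩ := h l (Finset.mem_Ico.mp hl).2
  exact ⟨n, by rw [single_pow, hn, single_eq_zero]⟩

theorem sub_truncLT_eq_single_mul (x : LaurentSeries A) (N : ℤ) :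
    x - truncLT N x =
      single N 1 * ofPowerSeries ℤ A (PowerSeries.mk fun n => x.coeff (N + n)) := by
  ext i
  obtain ⟨j, rfl⟩ : ∃ j, i = j + N := ⟨i - N, by ring⟩
  rw [coeff_single_mul_add, one_mul, PowerSeries.coeff_coe, coeff_sub, HahnSeries.coeff_truncLT]
  by_cases hj : j < 0
  · simp [hj]
  · simp [hj, add_comm N, Int.natAbs_of_nonneg (not_lt.mp hj)]

theorem coeff_zero_eulerLogDeriv_map_ofPowerSeries (U : (PowerSeries A)ˣ) :
    (dlog (Units.map (ofPowerSeries ℤ A : PowerSeries A →* LaurentSeries A) U)).coeff 0 = 0 := by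
  have hneg (F : PowerSeries A) : ∀ i < 0, (ofPowerSeries ℤ A F).coeff i = 0 := fun i hi => by
    simp [PowerSeries.coeff_coe, hi]
  rw [eulerLogDeriv, Units.coe_map_inv, Units.coe_map, MonoidHom.coe_coe, ← zero_add 0,
    coeff_mul_add_eq_mul (hneg _) (fun i hi => by simp [hneg _ i hi])]
  simp

theorem coeff_zero_eulerLogDeriv_of_isUnit_coeff {u : (LaurentSeries A)ˣ} {ν : ℤ}
    (hunit : IsUnit ((u : LaurentSeries A).coeff ν))
    (hnil : ∀ l < ν, IsNilpotent ((u : LaurentSeries A).coeff l)) :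
    (dlog u).coeff 0 = ν := by
  set U := PowerSeries.mk fun n => (u : LaurentSeries A).coeff (ν + n)
  have hU : IsUnit U := PowerSeries.isUnit_iff_constantCoeff.mpr (by simpa [U] using hunit)
  set P : (LaurentSeries A)ˣ := unitSingleHom (Multiplicative.ofAdd ν) *
    Units.map (ofPowerSeries ℤ A : PowerSeries A →* LaurentSeries A) hU.unit
  have hP : (P : LaurentSeries A) = u - truncLT ν (u : LaurentSeries A) := by
    rw [sub_truncLT_eq_single_mul]
    simp [P, U]
  have hnilP : IsNilpotent (((P⁻¹ * u : (LaurentSeries A)ˣ) : LaurentSeries A) - 1) := by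
    rw [Units.val_mul, ← P.inv_mul, ← mul_sub, hP, sub_sub_cancel]
    exact (Commute.all _ _).isNilpotent_mul_left (isNilpotent_truncLT _ hnil)
  rw [← mul_inv_cancel_left P u, eulerLogDeriv_mul, eulerLogDeriv_mul, coeff_add, coeff_add,
    coeff_zero_eulerLogDeriv_unitSingleHom, coeff_zero_eulerLogDeriv_map_ofPowerSeries,
    coeff_zero_eulerLogDeriv_of_isNilpotent _ _ hnilP]
  simp

theorem map_single_eq_C_mul_zpow (φ : LaurentSeries A →ₐ[A] LaurentSeries A)
    {u : (LaurentSeries A)ˣ} (hu : φ (single 1 1) = u) (l : ℤ) (c : A) :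
    φ (single l c) = C c * ((u ^ l : (LaurentSeries A)ˣ) : LaurentSeries A) := by
  have hC : φ (C c) = C c := by
    -- `algebraMap A A⸨X⸩` is found through `PowerSeries A`
    have h : algebraMap A (LaurentSeries A) c = C c := by rw [← ofPowerSeries_C]; rfl
    rw [← h, φ.commutes]
  set T : (LaurentSeries A)ˣ := unitSingleHom (Multiplicative.ofAdd 1)
  have hT : Units.map (φ : LaurentSeries A →* LaurentSeries A) T = u :=
    Units.ext (by simpa [T] using hu)
  have hl : (single l 1 : LaurentSeries A) = ((T ^ l : (LaurentSeries A)ˣ) : LaurentSeries A) := by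
    rw [← map_zpow, ← ofAdd_zsmul, val_unitSingleHom]
    simp
  rw [show single l c = C c * single l 1 by simp [C_apply, single_mul_single], map_mul, hC, hl,
    ← hT, ← map_zpow (Units.map (φ : LaurentSeries A →* LaurentSeries A)), Units.coe_map,
    MonoidHom.coe_coe]

theorem coeff_zero_map_single_mul_eulerLogDeriv (φ : LaurentSeries A →ₐ[A] LaurentSeries A)
    {u : (LaurentSeries A)ˣ} (hu : φ (single 1 1) = u) (l : ℤ) (c : A) :
    (φ (single l c) * dlog u).coeff 0 = (dlog u).coeff 0 * (single l c).coeff 0 := by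
  rw [map_single_eq_C_mul_zpow φ hu, mul_assoc, C_mul_eq_smul, coeff_smul,
    coeff_zero_zpow_mul_eulerLogDeriv, smul_eq_mul]
  by_cases hl : l = 0
  · simp [hl, mul_comm]
  · simp [hl, coeff_single_of_ne (Ne.symm hl)]

theorem coeff_zero_map_mul_eulerLogDeriv (φ : LaurentSeries A →ₐ[A] LaurentSeries A)
    (hcont : IsContMap φ) {u : (LaurentSeries A)ˣ} (hu : φ (single 1 1) = u)
    (h : LaurentSeries A) : (φ h * dlog u).coeff 0 = (dlog u).coeff 0 * h.coeff 0 := by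
  set y := dlog u
  obtain ⟨e, he⟩ := hcont (1 - y.order)
  set N := max e 1
  have htail : (φ (h - truncLT N h) * y).coeff 0 = 0 := by
    refine coeff_mul_eq_zero_of_lt_add (he _ fun i hi => ?_)
      (fun i hi => coeff_eq_zero_of_lt_order hi) (by omega : (0 : ℤ) < 1 - y.order + y.order)
    simp [show i < N from lt_max_of_lt_left hi]
  have htrunc : (φ (truncLT N h) * y).coeff 0 = y.coeff 0 * h.coeff 0 := by
    rw [← coeff_truncLT_of_lt (by omega : (0 : ℤ) < N) h, truncLT_eq_sum_single, map_sum,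
      Finset.sum_mul, coeff_sum, coeff_sum, Finset.mul_sum]
    exact Finset.sum_congr rfl fun l _ => coeff_zero_map_single_mul_eulerLogDeriv φ hu l _
  calc (φ h * y).coeff 0
      = (φ (truncLT N h) * y).coeff 0 + (φ (h - truncLT N h) * y).coeff 0 := by
        rw [← coeff_add, ← add_mul, ← map_add, add_sub_cancel]
    _ = y.coeff 0 * h.coeff 0 := by rw [htrunc, htail, add_zero]

end LaurentSeries

theorem substitution_injective_general {A : Type*} [CommRing A]
    (ψ : LaurentSeries A) (hψ : IsUnit ψ) (ν : ℤ)
    (hunit : IsUnit (ψ.coeff ν)) (hnil : ∀ l : ℤ, l < ν → IsNilpotent (ψ.coeff l))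
    (hreg : ∀ a : A, (ν : A) * a = 0 → a = 0)
    (φ : LaurentSeries A →ₐ[A] LaurentSeries A) (hcont : IsContMap ⇑φ)
    (hφt : φ (HahnSeries.single 1 1) = ψ) :
    Function.Injective ⇑φ := by
  rw [← hψ.unit_spec] at hunit hnil hφt
  have hres := LaurentSeries.coeff_zero_map_mul_eulerLogDeriv φ hcont hφt
  rw [LaurentSeries.coeff_zero_eulerLogDeriv_of_isUnit_coeff hunit hnil] at hres
  refine (injective_iff_map_eq_zero φ).mpr fun f hf => ?_
  ext k
  have hk := hres (single (-k) 1 * f)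
  rw [map_mul, hf, mul_zero, zero_mul, coeff_zero, ← add_neg_cancel k, coeff_single_mul_add,
    one_mul] at hk
  rw [coeff_zero]
  exact hreg _ hk.symm

/-- Let `φ` be the continuous `A`-algebra endomorphism of `A((t))` with `φ(t) = ψ`,
where `ψ ∈ A((t))*` has `ν(ψ) = ν ≥ 1`. If the image of `ν ∈ ℤ` in `A` is not a zero
divisor, then `φ` is injective. -/
theorem substitution_injective {A : Type*} [CommRing A]
    (ψ : LaurentSeries A) (hψ : IsUnit ψ) (ν : ℤ) (hν : 1 ≤ ν)
    (hunit : IsUnit (ψ.coeff ν)) (hnil : ∀ l : ℤ, l < ν → IsNilpotent (ψ.coeff l))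
    (hreg : ∀ a : A, (ν : A) * a = 0 → a = 0)
    (φ : LaurentSeries A →ₐ[A] LaurentSeries A) (hcont : IsContMap ⇑φ)
    (hφt : φ (HahnSeries.single 1 1) = ψ) :
    Function.Injective ⇑φ :=
  substitution_injective_general ψ hψ ν hunit hnil hreg φ hcont hφt
end

section
/- Let A be a commutative ring, ψ = t + h where h ∈ A[t, t^{-1}] is a Laurent polynomial all of whose coefficients are nilpotent in A. Let φ : A((t)) → A((t)) be the substitution endomorphism φ(f) = f(ψ). Then φ is bijective (an automorphism of the A-algebra A((t))). -/
/-!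
Write `φ = 1 + D` with `D f = φ f - f`, an `A`-linear map. The ideal `𝔞 ⊆ A` generated by the
coefficients of `h` is finitely generated by nilpotents, hence nilpotent. As `φ t ≡ t` modulo the
series with coefficients in `𝔞`, the same holds for every `tʲ`, `j ∈ ℤ`; by continuity each
coefficient of `D f` only involves finitely many `fⱼ D(tʲ)`, so `D` maps series with coefficients
in `I` to series with coefficients in `I𝔞`. Hence `Dⁿ = 0` once `𝔞ⁿ = 0`, and `φ = 1 + D` is a unit.
-/

open HahnSeries

theorem IsContMap.sub_id {A : Type*} [CommRing A] {φ : LaurentSeries A → LaurentSeries A}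
    (hφ : IsContMap φ) : IsContMap fun f => φ f - f := by
  intro d
  obtain ⟨e, he⟩ := hφ d
  refine ⟨max e d, fun f hf i hi => ?_⟩
  rw [coeff_sub, he f (fun j hj => hf j (lt_max_of_lt_left hj)) i hi,
    hf i (lt_max_of_lt_right hi), sub_zero]

namespace LaurentSeries

variable {A : Type*} [CommRing A]

def coeffIdeal (I : Ideal A) : Ideal (LaurentSeries A) where
  carrier := {f | ∀ i, f.coeff i ∈ I}
  add_mem' hf hg i := by rw [coeff_add]; exact I.add_mem (hf i) (hg i)
  zero_mem' i := by simp
  smul_mem' g f hf i := by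
    rw [smul_eq_mul, coeff_mul]
    exact I.sum_mem fun ij _ => I.mul_mem_left _ (hf ij.2)

theorem coeffIdeal_top : coeffIdeal (⊤ : Ideal A) = ⊤ :=
  eq_top_iff.2 fun _ _ _ => Submodule.mem_top

theorem coeffIdeal_bot : coeffIdeal (⊥ : Ideal A) = ⊥ :=
  eq_bot_iff.2 fun _ hf => Ideal.mem_bot.2 <| HahnSeries.ext <| funext fun i =>
    Ideal.mem_bot.1 (hf i)

noncomputable def singleOneHom : Multiplicative ℤ →* LaurentSeries A where
  toFun j := single j.toAdd 1
  map_one' := rfl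
  map_mul' j k := by rw [single_mul_single, mul_one]; rfl

theorem map_single_sub_single_mem (φ : LaurentSeries A →+* LaurentSeries A)
    {K : Ideal (LaurentSeries A)} (h1 : φ (single 1 1) - single 1 1 ∈ K) (j : ℤ) :
    φ (single j 1) - single j 1 ∈ K := by
  have key : ((Ideal.Quotient.mk K).comp φ).toMonoidHom.comp singleOneHom
      = (Ideal.Quotient.mk K).toMonoidHom.comp singleOneHom :=
    MonoidHom.ext_mint (Ideal.Quotient.eq.2 h1)
  exact Ideal.Quotient.eq.1 (DFunLike.congr_fun key (Multiplicative.ofAdd j))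

theorem finite_support_truncLT (e : ℤ) (f : LaurentSeries A) : (truncLT e f).support.Finite :=
  (Set.finite_Ico f.order e).subset fun i hi => by
    rw [support_truncLT] at hi
    exact ⟨not_lt.1 fun h => hi.1 (coeff_eq_zero_of_lt_order h), hi.2⟩

theorem eq_sum_single_of_support_finite {P : LaurentSeries A} (hP : P.support.Finite) :
    P = ∑ j ∈ hP.toFinset, single j (P.coeff j) := by
  ext i
  rw [coeff_sum]
  by_cases hi : i ∈ hP.toFinset
  · rw [Finset.sum_eq_single_of_mem i hi fun j _ hji => coeff_single_of_ne hji.symm]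
    simp
  · rw [Finset.sum_eq_zero fun j hj => coeff_single_of_ne (ne_of_mem_of_not_mem hj hi).symm]
    simpa using hi

theorem single_eq_smul_single_one (j : ℤ) (c : A) :
    single j c = c • (single j 1 : LaurentSeries A) := by
  ext i
  by_cases hi : i = j
  · subst hi; simp
  · simp [coeff_single_of_ne hi]

theorem map_mem_coeffIdeal_mul (D : LaurentSeries A →ₗ[A] LaurentSeries A) (hD : IsContMap D)
    {I J : Ideal A} (hsingle : ∀ j, D (single j 1) ∈ coeffIdeal J) {f : LaurentSeries A}
    (hf : f ∈ coeffIdeal I) : D f ∈ coeffIdeal (I * J) := by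
  intro i
  obtain ⟨e, he⟩ := hD (i + 1)
  have hP := finite_support_truncLT e f
  have htrunc : (D f).coeff i = (D (truncLT e f)).coeff i := by
    rw [← sub_eq_zero, ← coeff_sub, ← map_sub]
    refine he _ (fun j hj => ?_) i (lt_add_one i)
    simp [hj]
  rw [htrunc, eq_sum_single_of_support_finite hP, map_sum, coeff_sum]
  refine Ideal.sum_mem _ fun j _ => ?_
  rw [single_eq_smul_single_one, map_smul, coeff_smul, smul_eq_mul]
  refine Ideal.mul_mem_mul ?_ (hsingle j i)
  simp only [HahnSeries.coeff_truncLT]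
  split_ifs
  exacts [hf j, I.zero_mem]

theorem isNilpotent_of_map_single_mem (D : LaurentSeries A →ₗ[A] LaurentSeries A)
    (hD : IsContMap D) {J : Ideal A} (hJ : IsNilpotent J)
    (hsingle : ∀ j, D (single j 1) ∈ coeffIdeal J) : IsNilpotent D := by
  have hpow : ∀ m f, (D ^ m) f ∈ coeffIdeal (J ^ m) := by
    intro m
    induction m with
    | zero => simp [coeffIdeal_top]
    | succ m ih =>
      intro f
      rw [pow_succ' D, Module.End.mul_apply, pow_succ J]
      exact map_mem_coeffIdeal_mul D hD hsingle (ih f)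
  obtain ⟨n, hn⟩ := hJ
  refine ⟨n, LinearMap.ext fun f => ?_⟩
  simpa [hn, coeffIdeal_bot] using hpow n f

/-- The `A`-algebra structure on `A⸨X⸩` is inherited from `A⟦X⟧`, so its scalar action is only
propositionally the coefficientwise one. -/
theorem algebraMap_eq_C (c : A) : algebraMap A (LaurentSeries A) c = C c := by
  rw [algebraMap_apply', ← PowerSeries.C_eq_algebraMap, ofPowerSeries_C]

theorem algHom_map_smul (φ : LaurentSeries A →ₐ[A] LaurentSeries A) (c : A)
    (f : LaurentSeries A) :
    φ (c • f) = c • φ f := by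
  rw [← C_mul_eq_smul, ← C_mul_eq_smul, map_mul, ← algebraMap_eq_C, φ.commutes]

theorem bijective_of_map_single_one_sub_mem (φ : LaurentSeries A →ₐ[A] LaurentSeries A)
    (hcont : IsContMap φ) {J : Ideal A} (hJ : IsNilpotent J)
    (ht : φ (single 1 1) - single 1 1 ∈ coeffIdeal J) : Function.Bijective φ := by
  let D : LaurentSeries A →ₗ[A] LaurentSeries A :=
    { toFun f := φ f - f
      map_add' f g := by rw [map_add]; abel
      map_smul' c f := by rw [algHom_map_smul, smul_sub]; rfl }
  have hD : IsNilpotent D :=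
    isNilpotent_of_map_single_mem D hcont.sub_id hJ (map_single_sub_single_mem φ.toRingHom ht)
  have hφ : ⇑(1 + D) = φ := funext fun f => add_sub_cancel f (φ f)
  exact hφ ▸ (Module.End.isUnit_iff _).1 hD.isUnit_one_add

end LaurentSeries

/-- Let `ψ = t + h` where `h` is a Laurent polynomial (finite support) all of whose
coefficients are nilpotent in `A`, and let `φ` be the continuous `A`-algebra
endomorphism of `A((t))` with `φ(t) = ψ` (the substitution `f ↦ f(ψ)`). Then `φ` is
bijective, i.e. an automorphism of the `A`-algebra `A((t))`. -/
theorem substitution_by_nilpotent_perturbation_bijective {A : Type*} [CommRing A]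
    (h : LaurentSeries A) (hfin : (Function.support h.coeff).Finite)
    (hnil : ∀ l : ℤ, IsNilpotent (h.coeff l))
    (ψ : LaurentSeries A) (hψ : ψ = HahnSeries.single 1 1 + h)
    (φ : LaurentSeries A →ₐ[A] LaurentSeries A) (hcont : IsContMap ⇑φ)
    (hφt : φ (HahnSeries.single 1 1) = ψ) :
    Function.Bijective ⇑φ := by
  have hrange : (Set.range h.coeff).Finite :=
    ((hfin.image _).insert 0).subset (Function.range_subset_insert_image_support _)
  have hfg : (Ideal.span (Set.range h.coeff)).FG := ⟨hrange.toFinset, by simp⟩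
  refine LaurentSeries.bijective_of_map_single_one_sub_mem φ hcont
    (hfg.isNilpotent_iff_le_nilradical.2 <| Ideal.span_le.2 ?_) ?_
  · rintro _ ⟨l, rfl⟩
    exact mem_nilradical.2 (hnil l)
  · rw [hφt, hψ, add_sub_cancel_left]
    exact fun l => Ideal.subset_span ⟨l, rfl⟩
end
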